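/- arXiv:0708.2769 — 3 statements merged into one kernel-verified Lean document; each statement's English description precedes it below -/
import Mathlib

section
/- Let K be a field of characteristic p > 0 with two commuting derivations ∂₀, ∂₁, and let (a,b,c) be an algebraically independent triple over K. Then on the field K(a^ξ : |ξ| ≤ 2) with generators arranged as the triangle a^{(0,0)}=a, a^{(0,1)}=b^p+a, a^{(0,2)}=b^p+a, a^{(1,0)}=b, a^{(1,1)}=b, a^{(2,0)}=c, the differential condition is satisfied: the assignments ∂₀a = b, ∂₁a = b^p + a, ∂₀b = c, ∂₁b = b determine well-defined derivations on K(a,b) into K(a,b,c) whose brackets vanish on K(a), i.e., ∂₀∂₁a = ∂₁∂₀a. -/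
/-!
A derivation of `K(x)` over `K` can be prescribed freely on an algebraically independent family
`x`: on `K[x] ≅ K[X]` it is `f ↦ ∑ᵢ ∂f/∂Xᵢ(x) · uᵢ`, and the quotient rule extends it to fractions,
well defined because independence turns `r/s = r'/s'` into the polynomial identity `r s' = r' s`,
which can be differentiated. For `x = (a, b)` the bracket condition is then a computation in
characteristic `p`: `∂₀(bᵖ + a) = p bᵖ⁻¹ c + b = b = ∂₁ b = ∂₁(∂₀ a)`.
-/

open IntermediateField

/-- `d` is a derivation on the subset `A` of `M`: additive and Leibniz on `A`. -/
def IsDerivationOn {M : Type*} [Field M] (A : Set M) (d : M → M) : Prop :=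
  (∀ x ∈ A, ∀ y ∈ A, d (x + y) = d x + d y) ∧
  (∀ x ∈ A, ∀ y ∈ A, d (x * y) = x * d y + y * d x)

open MvPolynomial

section FracDeriv

variable {K M σ : Type*} [Field K] [Field M] [Algebra K M]

lemma exists_eq_div_of_mem_adjoin_range {x : σ → M} {y : M} (hy : y ∈ adjoin K (Set.range x)) :
    ∃ r s : MvPolynomial σ K, aeval x s ≠ 0 ∧ y = aeval x r / aeval x s := by
  obtain ⟨r, s, rfl⟩ := (mem_adjoin_range_iff K x y).mp hy
  by_cases hs : aeval x s = 0
  · exact ⟨0, 1, by simp, by simp [hs]⟩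
  · exact ⟨r, s, hs, rfl⟩

lemma aeval_mem_of_forall_mem {x : σ → M} {N : IntermediateField K M} (hxN : ∀ i, x i ∈ N)
    (f : MvPolynomial σ K) : aeval x f ∈ N := by
  have hf : aeval x f ∈ Algebra.adjoin K (Set.range x) := by
    rw [Algebra.adjoin_range_eq_range_aeval]
    exact ⟨f, rfl⟩
  exact Algebra.adjoin_le (Set.range_subset_iff.2 hxN) hf

variable [Fintype σ] (x u : σ → M)

noncomputable def directionalDeriv (f : MvPolynomial σ K) : M :=
  ∑ i, aeval x (pderiv i f) * u i

lemma directionalDeriv_add (f g : MvPolynomial σ K) :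
    directionalDeriv x u (f + g) = directionalDeriv x u f + directionalDeriv x u g := by
  simp only [directionalDeriv, map_add, add_mul, Finset.sum_add_distrib]

lemma directionalDeriv_mul (f g : MvPolynomial σ K) :
    directionalDeriv x u (f * g) =
      aeval x f * directionalDeriv x u g + aeval x g * directionalDeriv x u f := by
  simp only [directionalDeriv, Derivation.leibniz, smul_eq_mul, map_add, map_mul,
    Finset.mul_sum, ← Finset.sum_add_distrib]
  exact Finset.sum_congr rfl fun _ _ ↦ by ring

variable (K) in
open Classical in
/-- Outside `K(x)` this takes the junk value `0`. -/
noncomputable def fracDeriv (y : M) : M :=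
  if h : ∃ rs : MvPolynomial σ K × MvPolynomial σ K,
      aeval x rs.2 ≠ 0 ∧ y = aeval x rs.1 / aeval x rs.2 then
    (aeval x h.choose.2 * directionalDeriv x u h.choose.1 -
      aeval x h.choose.1 * directionalDeriv x u h.choose.2) / aeval x h.choose.2 ^ 2
  else 0

variable {x}

lemma fracDeriv_div (hx : AlgebraicIndependent K x) (r s : MvPolynomial σ K)
    (hs : aeval x s ≠ 0) :
    fracDeriv K x u (aeval x r / aeval x s) =
      (aeval x s * directionalDeriv x u r - aeval x r * directionalDeriv x u s) /
        aeval x s ^ 2 := by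
  have hex : ∃ rs : MvPolynomial σ K × MvPolynomial σ K,
      aeval x rs.2 ≠ 0 ∧ aeval x r / aeval x s = aeval x rs.1 / aeval x rs.2 :=
    ⟨(r, s), hs, rfl⟩
  rw [fracDeriv, dif_pos hex]
  obtain ⟨hs', heq⟩ := hex.choose_spec
  set r' := hex.choose.1
  set s' := hex.choose.2
  have hcross : aeval x r * aeval x s' = aeval x r' * aeval x s :=
    (div_eq_div_iff hs hs').mp heq
  have hpoly : r * s' = r' * s := hx (by simpa only [map_mul] using hcross)
  have hderiv := congrArg (directionalDeriv x u) hpoly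
  rw [directionalDeriv_mul, directionalDeriv_mul] at hderiv
  rw [div_eq_div_iff (pow_ne_zero _ hs') (pow_ne_zero _ hs)]
  linear_combination (-(aeval x s * aeval x s')) * hderiv +
    (aeval x s * directionalDeriv x u s' + aeval x s' * directionalDeriv x u s) * hcross

lemma fracDeriv_aeval (hx : AlgebraicIndependent K x) (f : MvPolynomial σ K) :
    fracDeriv K x u (aeval x f) = directionalDeriv x u f := by
  simpa [directionalDeriv] using fracDeriv_div u hx f 1 (by simp)

lemma fracDeriv_algebraMap (hx : AlgebraicIndependent K x) (k : K) :
    fracDeriv K x u (algebraMap K M k) = 0 := by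
  simpa [directionalDeriv] using fracDeriv_aeval u hx (C k)

lemma fracDeriv_apply (hx : AlgebraicIndependent K x) (i : σ) : fracDeriv K x u (x i) = u i := by
  classical
  simpa [directionalDeriv, pderiv_X, Pi.single_apply] using fracDeriv_aeval u hx (X i)

lemma isDerivationOn_fracDeriv (hx : AlgebraicIndependent K x) :
    IsDerivationOn (adjoin K (Set.range x) : Set M) (fracDeriv K x u) := by
  constructor <;> intro y hy z hz
  · obtain ⟨r, s, hs, rfl⟩ := exists_eq_div_of_mem_adjoin_range hy
    obtain ⟨r', s', hs', rfl⟩ := exists_eq_div_of_mem_adjoin_range hz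
    have hss' : aeval x (s * s') ≠ 0 := by rw [map_mul]; exact mul_ne_zero hs hs'
    have hsum : aeval x r / aeval x s + aeval x r' / aeval x s' =
        aeval x (r * s' + r' * s) / aeval x (s * s') := by
      rw [div_add_div _ _ hs hs']
      simp only [map_add, map_mul]
      ring
    rw [hsum, fracDeriv_div u hx _ _ hss', fracDeriv_div u hx _ _ hs,
      fracDeriv_div u hx _ _ hs']
    simp only [directionalDeriv_add, directionalDeriv_mul, map_add, map_mul]
    field_simp
    ring
  · obtain ⟨r, s, hs, rfl⟩ := exists_eq_div_of_mem_adjoin_range hy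
    obtain ⟨r', s', hs', rfl⟩ := exists_eq_div_of_mem_adjoin_range hz
    have hss' : aeval x (s * s') ≠ 0 := by rw [map_mul]; exact mul_ne_zero hs hs'
    have hprod : aeval x r / aeval x s * (aeval x r' / aeval x s') =
        aeval x (r * r') / aeval x (s * s') := by
      rw [map_mul, map_mul, div_mul_div_comm]
    rw [hprod, fracDeriv_div u hx _ _ hss', fracDeriv_div u hx _ _ hs,
      fracDeriv_div u hx _ _ hs']
    simp only [directionalDeriv_mul, map_mul]
    field_simp
    ring

lemma fracDeriv_mem (hx : AlgebraicIndependent K x) {N : IntermediateField K M}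
    (hxN : ∀ i, x i ∈ N) (huN : ∀ i, u i ∈ N) {y : M} (hy : y ∈ adjoin K (Set.range x)) :
    fracDeriv K x u y ∈ N := by
  obtain ⟨r, s, hs, rfl⟩ := exists_eq_div_of_mem_adjoin_range hy
  have hderiv (f : MvPolynomial σ K) : directionalDeriv x u f ∈ N :=
    sum_mem fun i _ ↦ mul_mem (aeval_mem_of_forall_mem hxN _) (huN i)
  rw [fracDeriv_div u hx _ _ hs]
  exact div_mem (sub_mem (mul_mem (aeval_mem_of_forall_mem hxN _) (hderiv _))
    (mul_mem (aeval_mem_of_forall_mem hxN _) (hderiv _)))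
    (pow_mem (aeval_mem_of_forall_mem hxN _) 2)

end FracDeriv

lemma pderiv_pow_charP {K σ : Type*} [CommSemiring K] (p : ℕ) [CharP K p] (i : σ)
    (f : MvPolynomial σ K) : pderiv i (f ^ p) = 0 := by
  rw [pderiv_pow, CharP.cast_eq_zero, zero_mul, zero_mul]

theorem charP_example_differential_condition_general (K M : Type*) [Field K] [Field M]
    [Algebra K M] (p : ℕ) [CharP K p] (a b c : M)
    (hind : AlgebraicIndependent K ![a, b, c]) :
    ∃ d0 d1 : M → M,
      IsDerivationOn (adjoin K {a, b} : IntermediateField K M) d0 ∧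
      IsDerivationOn (adjoin K {a, b} : IntermediateField K M) d1 ∧
      (∀ x ∈ adjoin K {a, b}, d0 x ∈ adjoin K {a, b, c}) ∧
      (∀ x ∈ adjoin K {a, b}, d1 x ∈ adjoin K {a, b, c}) ∧
      (∀ x : K, d0 (algebraMap K M x) = 0) ∧
      (∀ x : K, d1 (algebraMap K M x) = 0) ∧
      d0 a = b ∧ d1 a = b ^ p + a ∧ d0 b = c ∧ d1 b = b ∧
      d0 (d1 a) = d1 (d0 a) := by
  have hab : AlgebraicIndependent K ![a, b] := by
    convert hind.comp ![0, 1] (by decide) using 1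
    funext i; fin_cases i <;> rfl
  have hrange : Set.range ![a, b] = {a, b} := by simp [Set.pair_comm]
  have ha : a ∈ adjoin K {a, b, c} := subset_adjoin K _ (by simp)
  have hb : b ∈ adjoin K {a, b, c} := subset_adjoin K _ (by simp)
  have hc : c ∈ adjoin K {a, b, c} := subset_adjoin K _ (by simp)
  have hxN : ∀ i, ![a, b] i ∈ adjoin K {a, b, c} := Fin.forall_fin_two.2 ⟨ha, hb⟩
  have hd0a : fracDeriv K ![a, b] ![b, c] a = b := fracDeriv_apply _ hab 0
  have hd0b : fracDeriv K ![a, b] ![b, c] b = c := fracDeriv_apply _ hab 1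
  have hd1a : fracDeriv K ![a, b] ![b ^ p + a, b] a = b ^ p + a := fracDeriv_apply _ hab 0
  have hd1b : fracDeriv K ![a, b] ![b ^ p + a, b] b = b := fracDeriv_apply _ hab 1
  have hd0d1a : fracDeriv K ![a, b] ![b, c] (b ^ p + a) = b := by
    have h := fracDeriv_aeval ![b, c] hab ((X 1 : MvPolynomial (Fin 2) K) ^ p + X 0)
    simp only [directionalDeriv, Fin.sum_univ_two, map_add, pderiv_pow_charP, map_pow, aeval_X,
      pderiv_X] at h
    simpa using h
  rw [← hrange]
  exact ⟨fracDeriv K ![a, b] ![b, c], fracDeriv K ![a, b] ![b ^ p + a, b],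
    isDerivationOn_fracDeriv _ hab, isDerivationOn_fracDeriv _ hab,
    fun _ ↦ fracDeriv_mem _ hab hxN (Fin.forall_fin_two.2 ⟨hb, hc⟩),
    fun _ ↦ fracDeriv_mem _ hab hxN (Fin.forall_fin_two.2 ⟨add_mem (pow_mem hb p) ha, hb⟩),
    fracDeriv_algebraMap _ hab, fracDeriv_algebraMap _ hab,
    hd0a, hd1a, hd0b, hd1b, by rw [hd1a, hd0a, hd1b, hd0d1a]⟩

/-- Char-`p` example meeting the differential condition: over a field `K` of
characteristic `p > 0`, given `a, b, c` algebraically independent over `K`, the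
assignments `∂₀a = b`, `∂₁a = bᵖ + a`, `∂₀b = c`, `∂₁b = b` determine
well-defined derivations on `K(a,b)` into `K(a,b,c)`, vanishing on `K`, whose
brackets vanish at `a`: `∂₀∂₁a = ∂₁∂₀a`. -/
theorem charP_example_differential_condition (K M : Type*) [Field K] [Field M]
    [Algebra K M] (p : ℕ) [Fact p.Prime] [CharP K p] (a b c : M)
    (hind : AlgebraicIndependent K ![a, b, c]) :
    ∃ d0 d1 : M → M,
      IsDerivationOn (adjoin K {a, b} : IntermediateField K M) d0 ∧
      IsDerivationOn (adjoin K {a, b} : IntermediateField K M) d1 ∧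
      (∀ x ∈ adjoin K {a, b}, d0 x ∈ adjoin K {a, b, c}) ∧
      (∀ x ∈ adjoin K {a, b}, d1 x ∈ adjoin K {a, b, c}) ∧
      (∀ x : K, d0 (algebraMap K M x) = 0) ∧
      (∀ x : K, d1 (algebraMap K M x) = 0) ∧
      d0 a = b ∧ d1 a = b ^ p + a ∧ d0 b = c ∧ d1 b = b ∧
      d0 (d1 a) = d1 (d0 a) :=
  charP_example_differential_condition_general K M p a b c hind
end

section
/- Let K be a field with algebraically independent elements a, b, c, and suppose commuting derivations ∂₀, ∂₁ on a field containing K(a,b,c) satisfy ∂₀a = c², ∂₁a = c, ∂₀b = 2a, ∂₁b = c. Then ∂₀c = 2c and ∂₁c = 1, and consequently ∂₁∂₀c = 2 while ∂₀∂₁c = 0; hence if the characteristic of K is not 2, no such commuting derivations exist. -/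
/-!
Commutation at `b` gives `∂₀c = ∂₀∂₁b = ∂₁∂₀b = ∂₁(2a) = 2c`, and commutation at `a` gives
`∂₀c = ∂₀∂₁a = ∂₁∂₀a = ∂₁(c²) = 2c·∂₁c`. As `2c ≠ 0`, this forces `∂₁c = 1`, so that
`∂₁∂₀c = ∂₁(2c) = 2` but `∂₀∂₁c = ∂₀1 = 0`, contradicting commutation at `c`.
-/

section Leibniz

variable {R : Type*} [CommRing R] {d : R → R}

theorem leibniz_map_one (hmul : ∀ x y, d (x * y) = x * d y + y * d x) : d 1 = 0 := by
  simpa using hmul 1 1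

theorem leibniz_map_two_mul (hadd : ∀ x y, d (x + y) = d x + d y)
    (hmul : ∀ x y, d (x * y) = x * d y + y * d x) (x : R) : d (2 * x) = 2 * d x := by
  have hd2 : d 2 = 0 := by
    rw [← one_add_one_eq_two, hadd, leibniz_map_one hmul, add_zero]
  rw [hmul, hd2, mul_zero, add_zero]

theorem leibniz_map_mul_self (hmul : ∀ x y, d (x * y) = x * d y + y * d x) (x : R) :
    d (x * x) = 2 * x * d x := by
  rw [hmul]; ring

end Leibniz

theorem hrushovski_counterexample_general {M : Type*} [Field M] (K : Subfield M)
    (hchar : ringChar K ≠ 2) (d0 d1 : M → M)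
    (h1add : ∀ x y : M, d1 (x + y) = d1 x + d1 y)
    (h0mul : ∀ x y : M, d0 (x * y) = x * d0 y + y * d0 x)
    (h1mul : ∀ x y : M, d1 (x * y) = x * d1 y + y * d1 x)
    (hcomm : ∀ x : M, d0 (d1 x) = d1 (d0 x))
    (a b c : M) (hind : AlgebraicIndependent K ![a, b, c])
    (ha0 : d0 a = c * c) (ha1 : d1 a = c)
    (hb0 : d0 b = 2 * a) (hb1 : d1 b = c) :
    (d0 c = 2 * c ∧ d1 c = 1 ∧ d1 (d0 c) = 2 ∧ d0 (d1 c) = 0) ∧ False := by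
  have h2 : (2 : M) ≠ 0 := Ring.two_ne_zero (Algebra.ringChar_eq K M ▸ hchar)
  have hc : c ≠ 0 := by simpa using hind.ne_zero 2
  have hd0c : d0 c = 2 * c :=
    calc d0 c = d1 (d0 b) := by rw [← hcomm, hb1]
      _ = 2 * c := by rw [hb0, leibniz_map_two_mul h1add h1mul, ha1]
  have hd1c : d1 c = 1 := by
    refine mul_left_cancel₀ (mul_ne_zero h2 hc) ?_
    calc 2 * c * d1 c = d1 (d0 a) := by rw [ha0, leibniz_map_mul_self h1mul]
      _ = d0 c := by rw [← hcomm, ha1]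
      _ = 2 * c * 1 := by rw [hd0c, mul_one]
  have hd1d0c : d1 (d0 c) = 2 := by
    rw [hd0c, leibniz_map_two_mul h1add h1mul, hd1c, mul_one]
  have hd0d1c : d0 (d1 c) = 0 := by
    rw [hd1c, leibniz_map_one h0mul]
  exact ⟨⟨hd0c, hd1c, hd1d0c, hd0d1c⟩, h2 (by rw [← hd1d0c, ← hcomm, hd0d1c])⟩

/-- Hrushovski's counterexample: if commuting derivations `∂₀, ∂₁` on a field
containing `K(a,b,c)` (with `a, b, c` algebraically independent over `K`)
satisfy `∂₀a = c²`, `∂₁a = c`, `∂₀b = 2a`, `∂₁b = c`, then `∂₀c = 2c` and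
`∂₁c = 1`, whence `∂₁∂₀c = 2` while `∂₀∂₁c = 0`; hence if the characteristic
of `K` is not `2`, no such commuting derivations exist. -/
theorem hrushovski_counterexample {M : Type*} [Field M] (K : Subfield M)
    (hchar : ringChar K ≠ 2) (d0 d1 : M → M)
    (h0add : ∀ x y : M, d0 (x + y) = d0 x + d0 y)
    (h1add : ∀ x y : M, d1 (x + y) = d1 x + d1 y)
    (h0mul : ∀ x y : M, d0 (x * y) = x * d0 y + y * d0 x)
    (h1mul : ∀ x y : M, d1 (x * y) = x * d1 y + y * d1 x)
    (hcomm : ∀ x : M, d0 (d1 x) = d1 (d0 x))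
    (a b c : M) (hind : AlgebraicIndependent K ![a, b, c])
    (ha0 : d0 a = c * c) (ha1 : d1 a = c)
    (hb0 : d0 b = 2 * a) (hb1 : d1 b = c) :
    (d0 c = 2 * c ∧ d1 c = 1 ∧ d1 (d0 c) = 2 ∧ d0 (d1 c) = 0) ∧ False :=
  hrushovski_counterexample_general K hchar d0 d1 h1add h0mul h1mul hcomm a b c hind ha0 ha1 hb0 hb1
end

section
/- For all positive integers m and n and every sequence (a_i : i ∈ ℕ) of positive integers, there is a bound N, depending only on m, n, and the sequence, on the length of strictly increasing chains S₀ ⊊ S₁ ⊊ S₂ ⊊ ⋯ of antichains S_k of ℕ^m × Fin n (with the product order), where each S_k ⊆ {(ξ,h) : |ξ| ≤ a_k}. -/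
/-- The height `|σ| = ∑_{i<m} σ(i)` of a multi-index. -/
def height {m : ℕ} (σ : Fin m → ℕ) : ℕ := ∑ i, σ i

/-- The product order on `ℕ^m × Fin n`: `(σ,k) ≤ (τ,ℓ)` iff `σ ≤ τ`
componentwise and `k = ℓ`. -/
def prodLE {m n : ℕ} (p q : (Fin m → ℕ) × Fin n) : Prop :=
  p.1 ≤ q.1 ∧ p.2 = q.2

/-! If `S₀ ⊊ ⋯ ⊊ S_L` is such a chain, choose `p k ∈ S (k+1) \ S k`. These are distinct points
of the antichain `S_L`, so they form a bad sequence for the product order, with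
`|p k| ≤ a (k+1)`. The product order is a well-quasi-order (Dickson's lemma) and each position
has only finitely many admissible values, so by Kőnig's lemma arbitrarily long such bad
sequences would assemble into an infinite one. -/

variable {α : Type*} {r : α → α → Prop}

def BadSeq (r : α → α → Prop) (B : ℕ → Set α) (L : ℕ) : Type _ :=
  {p : Fin L → α // (∀ i : Fin L, p i ∈ B i) ∧ ∀ i j, i < j → ¬ r (p i) (p j)}

namespace BadSeq

variable {B : ℕ → Set α}

def restrict {L L' : ℕ} (h : L ≤ L') (p : BadSeq r B L') : BadSeq r B L :=
  ⟨fun i => p.1 (Fin.castLE h i), fun i => p.2.1 (Fin.castLE h i), fun _ _ hij => p.2.2 _ _ hij⟩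

theorem finite (hB : ∀ i, (B i).Finite) (L : ℕ) : Finite (BadSeq r B L) := by
  have := fun i : Fin L => (hB i).to_subtype
  exact Finite.of_injective (β := (i : Fin L) → B i) (fun p i => ⟨p.1 i, p.2.1 i⟩)
    fun p q h => Subtype.ext <| funext fun i => congrArg Subtype.val (congrFun h i)

theorem not_wellQuasiOrdered_of_forall_nonempty (hB : ∀ i, (B i).Finite)
    (h : ∀ L, Nonempty (BadSeq r B L)) : ¬ WellQuasiOrdered r := by
  have := finite (r := r) hB 0
  obtain ⟨f, hf⟩ := exists_seq_forall_proj_of_forall_finite (α := BadSeq r B)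
    (fun h p => p.restrict h) (fun _ _ => rfl) (fun _ _ _ _ _ _ => rfl)
    (fun i _ => have := finite (r := r) hB (i + 1); Set.toFinite _)
  intro hr
  obtain ⟨i, j, hij, hrij⟩ := hr fun k => (f (k + 1)).1 (Fin.last k)
  have hfi : (f (i + 1)).1 (Fin.last i) = (f (j + 1)).1 ⟨i, by omega⟩ := by
    rw [← hf (show i + 1 ≤ j + 1 by omega)]
    rfl
  exact (f (j + 1)).2.2 ⟨i, by omega⟩ (Fin.last j) hij (hfi ▸ hrij)

end BadSeq

theorem WellQuasiOrdered.exists_bound_of_nonempty_badSeq (hr : WellQuasiOrdered r)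
    {B : ℕ → Set α} (hB : ∀ i, (B i).Finite) :
    ∃ N, ∀ L, Nonempty (BadSeq r B L) → L ≤ N := by
  by_contra! h
  refine BadSeq.not_wellQuasiOrdered_of_forall_nonempty hB (fun L => ?_) hr
  obtain ⟨L', ⟨p⟩, hL'⟩ := h L
  exact ⟨p.restrict hL'.le⟩

theorem IsAntichain.nonempty_badSeq_of_ssubset {S B : ℕ → Set α} {L : ℕ}
    (hanti : IsAntichain r (S L)) (hchain : ∀ k < L, S k ⊂ S (k + 1))
    (hB : ∀ k < L, S (k + 1) ⊆ B k) : Nonempty (BadSeq r B L) := by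
  have hmono : MonotoneOn S (Set.Iic L) :=
    monotoneOn_of_le_succ Set.ordConnected_Iic fun k _ _ hk => by
      rw [Order.succ_eq_add_one] at hk ⊢
      exact (hchain k hk).subset
  choose p hp using fun k : Fin L => Set.nonempty_of_ssubset (hchain k k.2)
  have hpS : ∀ (k : Fin L) (j : ℕ), k < j → j ≤ L → p k ∈ S j := fun k j hkj hjL =>
    hmono (Set.mem_Iic.2 (by omega)) (Set.mem_Iic.2 hjL) hkj (hp k).1
  refine ⟨p, fun k => hB k k.2 (hp k).1, fun i j hij => hanti (hpS i L (by omega) le_rfl)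
    (hpS j L (by omega) le_rfl) fun h => (hp j).2 ?_⟩
  exact h ▸ hpS i j hij j.2.le

theorem wellQuasiOrdered_prodLE {m n : ℕ} : WellQuasiOrdered (@prodLE m n) :=
  wellQuasiOrdered_le.prod (Finite.wellQuasiOrdered _)

theorem finite_setOf_height_le (m n B : ℕ) :
    {p : (Fin m → ℕ) × Fin n | height p.1 ≤ B}.Finite := by
  refine ((Set.finite_Iic fun _ : Fin m => B).prod (Set.finite_univ (α := Fin n))).subset ?_
  intro p hp
  refine ⟨fun i => le_trans ?_ hp, Set.mem_univ _⟩
  exact Finset.single_le_sum (fun j _ => Nat.zero_le (p.1 j)) (Finset.mem_univ i)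

theorem bounded_chains_of_antichains_general (m n : ℕ)
    (a : ℕ → ℕ) :
    ∃ N : ℕ, ∀ (L : ℕ) (S : ℕ → Set ((Fin m → ℕ) × Fin n)),
      (∀ k < L, S k ⊂ S (k + 1)) →
      (∀ k ≤ L, IsAntichain prodLE (S k)) →
      (∀ k ≤ L, S k ⊆ {p | height p.1 ≤ a k}) →
      L ≤ N := by
  obtain ⟨N, hN⟩ := wellQuasiOrdered_prodLE.exists_bound_of_nonempty_badSeq
    fun k => finite_setOf_height_le m n (a (k + 1))
  exact ⟨N, fun L S hchain hanti hheight =>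
    hN L ((hanti L le_rfl).nonempty_badSeq_of_ssubset hchain fun k hk => hheight (k + 1) hk)⟩

/-- For all positive integers `m` and `n` and every sequence of positive
integers `(aᵢ)`, there is a bound `N` (depending only on `m`, `n` and the
sequence) on the length of strictly increasing chains `S₀ ⊊ S₁ ⊊ ⋯` of
antichains `S_k` of `ℕ^m × Fin n` with `S_k ⊆ {(ξ,h) : |ξ| ≤ a_k}`. -/
theorem bounded_chains_of_antichains (m n : ℕ) (hm : 0 < m) (hn : 0 < n)
    (a : ℕ → ℕ) (ha : ∀ i, 0 < a i) :
    ∃ N : ℕ, ∀ (L : ℕ) (S : ℕ → Set ((Fin m → ℕ) × Fin n)),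
      (∀ k < L, S k ⊂ S (k + 1)) →
      (∀ k ≤ L, IsAntichain prodLE (S k)) →
      (∀ k ≤ L, S k ⊆ {p | height p.1 ≤ a k}) →
      L ≤ N :=
  bounded_chains_of_antichains_general m n a
end
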